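/- arXiv:1509.03805 — 4 statements merged into one kernel-verified Lean document; each statement's English description precedes it below -/
import Mathlib

section
/- Let 0 < ρ < 1 and set a = 2(1−ρ)/(2−ρ), b = 1/(2−ρ), and F(y) = (a + b|y|)·y/|y| for y ∈ ℝ³ \ {0}. Let E: ℝ³ \ {0} → ℂ³ be any vector field and define the push-forward field Ẽ(x) = (DF(y))^{-T}·E(y), where y = F⁻¹(x). Then for every x with |x| = 1 one has F⁻¹(x) = ρx and x × Ẽ(x) = ρ·(x × E(ρx)). -/
/-!
At `|y| = ρ` the Jacobian of `F` is `ρ⁻¹ I` plus a multiple of the radial projection `ŷ ŷᵀ`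
(since `a / ρ + b = ρ⁻¹`), so `(DF)⁻ᵀ = ρ I + γ ŷ ŷᵀ` for some `γ`. The radial part is
annihilated by `ŷ ×`, leaving `ŷ × (DF)⁻ᵀ E = ρ (ŷ × E)`.
-/

open Matrix

noncomputable def Frad (a b : ℝ) (y : EuclideanSpace ℝ (Fin 3)) : EuclideanSpace ℝ (Fin 3) :=
  ((a + b * ‖y‖) / ‖y‖) • y

noncomputable def JacFrad (a b : ℝ) (y : EuclideanSpace ℝ (Fin 3)) :
    Matrix (Fin 3) (Fin 3) ℝ :=
  Matrix.of fun i j => (fderiv ℝ (Frad a b) y) (EuclideanSpace.single j 1) i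

section Calculus

variable {E : Type*} [NormedAddCommGroup E] [InnerProductSpace ℝ E]

theorem hasFDerivAt_norm {y : E} (hy : y ≠ 0) :
    HasFDerivAt (fun z : E => ‖z‖) (‖y‖⁻¹ • innerSL ℝ y) y := by
  have hy2 : ‖y‖ ^ 2 ≠ 0 := by positivity
  convert (hasStrictFDerivAt_norm_sq y).hasFDerivAt.sqrt hy2 using 1
  · simp only [Real.sqrt_sq (norm_nonneg _)]
  · ext v
    simp only [_root_.smul_apply, coe_innerSL_apply, smul_eq_mul, Real.sqrt_sq (norm_nonneg y),
      nsmul_eq_mul, Nat.cast_ofNat]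
    field_simp

theorem hasFDerivAt_radial (a b : ℝ) {y : E} (hy : y ≠ 0) :
    HasFDerivAt (fun z : E => ((a + b * ‖z‖) / ‖z‖) • z)
      ((a / ‖y‖ + b) • ContinuousLinearMap.id ℝ E
        - (a / ‖y‖ ^ 3) • (innerSL ℝ y).smulRight y) y := by
  -- a global identity: at `z = 0` both sides vanish, whatever the junk value of `/ ‖0‖`
  have hF : (fun z : E => ((a + b * ‖z‖) / ‖z‖) • z) = fun z => (a * ‖z‖⁻¹ + b) • z := by
    funext z
    rcases eq_or_ne z 0 with rfl | hz
    · simp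
    · rw [add_div, mul_div_cancel_right₀ _ (norm_ne_zero_iff.mpr hz), div_eq_mul_inv]
  have hinv := (hasDerivAt_inv (norm_ne_zero_iff.mpr hy)).comp_hasFDerivAt y (hasFDerivAt_norm hy)
  rw [hF]
  refine (((hinv.const_mul a).add_const b).smul (hasFDerivAt_id y)).congr_fderiv ?_
  ext v
  simp only [Function.comp_apply, neg_smul, smul_neg, id_eq, _root_.add_apply, _root_.smul_apply,
    _root_.sub_apply, _root_.neg_apply, ContinuousLinearMap.id_apply,
    ContinuousLinearMap.smulRight_apply, coe_innerSL_apply, smul_eq_mul]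
  module

end Calculus

theorem EuclideanSpace.ofLp_dotProduct_self {n : Type*} [Fintype n] (u : EuclideanSpace ℝ n) :
    u.ofLp ⬝ᵥ u.ofLp = ‖u‖ ^ 2 := by
  rw [← real_inner_self_eq_norm_sq, EuclideanSpace.inner_eq_star_dotProduct, star_trivial]

theorem frad_smul_of_norm_eq_one (a b : ℝ) {u : EuclideanSpace ℝ (Fin 3)} (hu : ‖u‖ = 1)
    {t : ℝ} (ht : 0 < t) : Frad a b (t • u) = (a + b * t) • u := by
  have hn : ‖t • u‖ = t := by rw [norm_smul, hu, Real.norm_of_nonneg ht.le, mul_one]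
  rw [Frad, hn, smul_smul, div_mul_cancel₀ _ ht.ne']

theorem jacFrad_smul_of_norm_eq_one (a b : ℝ) {u : EuclideanSpace ℝ (Fin 3)} (hu : ‖u‖ = 1)
    {t : ℝ} (ht : 0 < t) :
    JacFrad a b (t • u) = (a / t + b) • 1 - (a / t) • vecMulVec u u := by
  have hn : ‖t • u‖ = t := by rw [norm_smul, hu, Real.norm_of_nonneg ht.le, mul_one]
  have hu0 : u ≠ 0 := norm_ne_zero_iff.mp (hu ▸ one_ne_zero)
  have hF : HasFDerivAt (Frad a b) _ (t • u) := hasFDerivAt_radial a b (smul_ne_zero ht.ne' hu0)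
  ext i j
  rw [JacFrad, of_apply, hF.fderiv]
  simp only [hn, map_smul, _root_.sub_apply, _root_.smul_apply, ContinuousLinearMap.id_apply,
    ContinuousLinearMap.smulRight_apply, coe_innerSL_apply, EuclideanSpace.inner_single_right,
    Real.ringHom_apply, one_mul, smul_eq_mul, PiLp.sub_apply, PiLp.smul_apply, PiLp.single_apply,
    mul_ite, mul_one, mul_zero, Matrix.sub_apply, Matrix.smul_apply, one_apply, vecMulVec_apply,
    sub_right_inj]
  field_simp

section Algebra

variable {R : Type*} [CommRing R]

theorem cross_mulVec_smul_one_add_smul_vecMulVec (c d : R) (u v : Fin 3 → R) :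
    u ⨯₃ ((c • 1 + d • vecMulVec u u) *ᵥ v) = c • (u ⨯₃ v) := by
  simp [add_mulVec, smul_mulVec, vecMulVec_mulVec]

theorem map_smul_one_add_smul_vecMulVec {S : Type*} [CommRing S] (f : R →+* S)
    {n : Type*} [DecidableEq n] (c d : R) (u : n → R) :
    (c • 1 + d • vecMulVec u u).map f =
      f c • 1 + f d • vecMulVec (fun i => f (u i)) (fun i => f (u i)) := by
  ext i j
  rcases eq_or_ne i j with rfl | h <;> simp [one_apply, vecMulVec_apply, *]

variable {K : Type*} [Field K] {n : Type*} [Fintype n]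

theorem vecMulVec_self_mul_self {u : n → K} (hu : u ⬝ᵥ u = 1) :
    vecMulVec u u * vecMulVec u u = vecMulVec u u := by
  rw [vecMulVec_mul_vecMulVec, hu, one_smul]

theorem inv_smul_one_sub_smul_vecMulVec [DecidableEq n] {u : n → K} (hu : u ⬝ᵥ u = 1) {α β : K}
    (hα : α ≠ 0) (hαβ : α ≠ β) :
    (α • 1 - β • vecMulVec u u)⁻¹ = α⁻¹ • 1 + (β / (α * (α - β))) • vecMulVec u u := by
  have hαβ' : α - β ≠ 0 := sub_ne_zero.mpr hαβ
  refine inv_eq_right_inv ?_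
  simp only [sub_mul, mul_add, smul_mul_smul, Matrix.one_mul, Matrix.mul_one,
    vecMulVec_self_mul_self hu, mul_inv_cancel₀ hα, one_smul]
  match_scalars
  · rfl
  · field_simp
    ring

end Algebra

/-- For the regularized cloaking map `F = F_ρ⁽¹⁾` with `a = 2(1-ρ)/(2-ρ)`, `b = 1/(2-ρ)`,
and any field `E : ℝ³ \ {0} → ℂ³`, the push-forward field `Ẽ(x) = (DF(y))⁻ᵀ E(y)`,
`y = F⁻¹(x)`, satisfies for `‖x‖ = 1`: `F⁻¹(x) = ρx` and `x × Ẽ(x) = ρ (x × E(ρx))`. -/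
theorem pushforward_interface_condition (ρ : ℝ) (hρ0 : 0 < ρ) (hρ1 : ρ < 1)
    (E : EuclideanSpace ℝ (Fin 3) → (Fin 3 → ℂ))
    (x : EuclideanSpace ℝ (Fin 3)) (hx : ‖x‖ = 1) :
    Frad (2 * (1 - ρ) / (2 - ρ)) (1 / (2 - ρ)) (ρ • x) = x ∧
    crossProduct (fun i => (x i : ℂ))
        ((((JacFrad (2 * (1 - ρ) / (2 - ρ)) (1 / (2 - ρ)) (ρ • x)).transpose)⁻¹.map
            Complex.ofReal) *ᵥ E (ρ • x))
      = (ρ : ℂ) • crossProduct (fun i => (x i : ℂ)) (E (ρ • x)) := by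
  have h2ρ : 2 - ρ ≠ 0 := by linarith
  have hα : 2 * (1 - ρ) / (2 - ρ) / ρ + 1 / (2 - ρ) = ρ⁻¹ := by field_simp; ring
  have hαβ : ρ⁻¹ ≠ 2 * (1 - ρ) / (2 - ρ) / ρ := by
    rw [← hα]; simpa using h2ρ
  have hxx : x.ofLp ⬝ᵥ x.ofLp = 1 := by rw [EuclideanSpace.ofLp_dotProduct_self, hx, one_pow]
  refine ⟨?_, ?_⟩
  · rw [frad_smul_of_norm_eq_one _ _ hx hρ0,
      show 2 * (1 - ρ) / (2 - ρ) + 1 / (2 - ρ) * ρ = 1 by field_simp; ring, one_smul]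
  · rw [jacFrad_smul_of_norm_eq_one _ _ hx hρ0, hα]
    simp only [transpose_sub, transpose_smul, transpose_one, transpose_vecMulVec]
    rw [inv_smul_one_sub_smul_vecMulVec hxx (inv_ne_zero hρ0.ne') hαβ, inv_inv]
    convert cross_mulVec_smul_one_add_smul_vecMulVec (ρ : ℂ) _ _ (E (ρ • x)) using 3
    exact map_smul_one_add_smul_vecMulVec Complex.ofRealHom _ _ x.ofLp
end

section
/- For every integer n ≥ 0, lim_{t→0⁺} t^{n+1}·h_n(t) = −i·(2n−1)!!. -/
/-! Writing `x = 1/t`, induction on the recursion gives `f_n(t) = P_n(x) sin t + Q_n(x) cos t`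
(and likewise for `g_n`) with polynomials of degree `≤ 2n+1`, where one step is
`(P, Q) ↦ (-x³P' - xQ, -x³Q' + xP)`. This step multiplies the coefficient of `x^{2m+1}` in `Q`
by `-(2m+1)`, so `t^{2n+1} f_n(t)` tends to `(-1)ⁿ (2n-1)!!` times the coefficient of `x` in `Q_0`:
`0` for `f_0 = x sin t` and `1` for `g_0 = x cos t`. Finally
`t^{n+1} h_n = (-1)ⁿ t^{2n+1} (f_n - i g_n)`. -/

open Filter Topology
open scoped Nat

/-- `sphf n` from Rayleigh's formula: `sphf 0 t = sin t / t`,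
`sphf (m+1) t = (sphf m)'(t) / t`. -/
noncomputable def sphf : ℕ → ℝ → ℝ
  | 0 => fun t => Real.sin t / t
  | m + 1 => fun t => deriv (sphf m) t / t

/-- `sphg n` from Rayleigh's formula: `sphg 0 t = cos t / t`,
`sphg (m+1) t = (sphg m)'(t) / t`. -/
noncomputable def sphg : ℕ → ℝ → ℝ
  | 0 => fun t => Real.cos t / t
  | m + 1 => fun t => deriv (sphg m) t / t

/-- The spherical Bessel function of the first kind, `j_n(t) = (-1)ⁿ tⁿ f_n(t)`. -/
noncomputable def sphj (n : ℕ) (t : ℝ) : ℝ := (-1) ^ n * t ^ n * sphf n t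

/-- The spherical Bessel function of the second kind, `y_n(t) = -(-1)ⁿ tⁿ g_n(t)`. -/
noncomputable def sphy (n : ℕ) (t : ℝ) : ℝ := -((-1) ^ n * t ^ n * sphg n t)

/-- The spherical Hankel function of the first kind, `h_n(t) = j_n(t) + i y_n(t)`. -/
noncomputable def sphh (n : ℕ) (t : ℝ) : ℂ := (sphj n t : ℂ) + Complex.I * (sphy n t : ℂ)

/-- `𝒥_n(t) = j_n(t) + t j_n'(t)`. -/
noncomputable def sphJ (n : ℕ) (t : ℝ) : ℝ := sphj n t + t * deriv (sphj n) t

/-- `ℋ_n(t) = h_n(t) + t h_n'(t)`. -/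
noncomputable def sphH (n : ℕ) (t : ℝ) : ℂ := sphh n t + t * deriv (sphh n) t

open Polynomial

section RayleighStep

variable {R : Type*} [CommRing R]

noncomputable def rayleighPart (A B : R[X]) : R[X] := X * B - X ^ 3 * derivative A

-- In the variable `x = 1/t`: if `f(t) = P(x) sin t + Q(x) cos t`, then `f'(t)/t` has the same
-- shape with `(P, Q)` replaced by `rayleighStep (P, Q)`.
noncomputable def rayleighStep (pq : R[X] × R[X]) : R[X] × R[X] :=
  (rayleighPart pq.1 (-pq.2), rayleighPart pq.2 pq.1)

lemma natDegree_rayleighPart_le {A B : R[X]} {N : ℕ} (hA : A.natDegree ≤ N + 1)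
    (hB : B.natDegree ≤ N + 1) : (rayleighPart A B).natDegree ≤ N + 3 := by
  have hXB : (X * B).natDegree ≤ N + 3 :=
    (natDegree_mul_le.trans (add_le_add natDegree_X_le hB)).trans (by omega)
  have hXA : (X ^ 3 * derivative A).natDegree ≤ N + 3 :=
    (natDegree_mul_le.trans (add_le_add (natDegree_X_pow_le 3)
      ((natDegree_derivative_le A).trans (Nat.sub_le_sub_right hA 1)))).trans (by omega)
  exact (natDegree_sub_le _ _).trans (max_le hXB hXA)

lemma coeff_rayleighPart {A B : R[X]} {N : ℕ} (hB : B.natDegree ≤ N + 1) :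
    (rayleighPart A B).coeff (N + 3) = -((N + 1 : R) * A.coeff (N + 1)) := by
  have hB' : B.coeff (N + 2) = 0 := coeff_eq_zero_of_natDegree_lt (by omega)
  rw [rayleighPart, coeff_sub, show N + 3 = N + 2 + 1 by ring, coeff_X_mul, hB',
    show N + 2 + 1 = N + 3 by ring, coeff_X_pow_mul, coeff_derivative]
  ring

lemma natDegree_iterate_rayleighStep_le {pq : R[X] × R[X]} (h₁ : pq.1.natDegree ≤ 1)
    (h₂ : pq.2.natDegree ≤ 1) (n : ℕ) :
    (rayleighStep^[n] pq).1.natDegree ≤ 2 * n + 1 ∧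
      (rayleighStep^[n] pq).2.natDegree ≤ 2 * n + 1 := by
  induction n with
  | zero => exact ⟨h₁, h₂⟩
  | succ m ih =>
    obtain ⟨ih₁, ih₂⟩ := ih
    rw [Function.iterate_succ_apply']
    exact ⟨natDegree_rayleighPart_le (N := 2 * m) ih₁ (by rwa [natDegree_neg]),
      natDegree_rayleighPart_le (N := 2 * m) ih₂ ih₁⟩

lemma coeff_iterate_rayleighStep_snd {pq : R[X] × R[X]} (h₁ : pq.1.natDegree ≤ 1)
    (h₂ : pq.2.natDegree ≤ 1) (n : ℕ) :
    (rayleighStep^[n] pq).2.coeff (2 * n + 1) = (-1 : R) ^ n * ((2 * n - 1)‼ : ℕ) * pq.2.coeff 1 := by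
  induction n with
  | zero => simp
  | succ m ih =>
    have hdeg := (natDegree_iterate_rayleighStep_le h₁ h₂ m).1
    rw [Function.iterate_succ_apply', show 2 * (m + 1) + 1 = 2 * m + 3 by ring]
    rw [rayleighStep, coeff_rayleighPart hdeg, ih, show 2 * (m + 1) - 1 = 2 * m + 1 by omega,
      Nat.doubleFactorial_add_one]
    push_cast
    ring

end RayleighStep

noncomputable def sinCosComb (pq : ℝ[X] × ℝ[X]) (t : ℝ) : ℝ :=
  pq.1.eval t⁻¹ * Real.sin t + pq.2.eval t⁻¹ * Real.cos t

lemma hasDerivAt_sinCosComb (pq : ℝ[X] × ℝ[X]) {t : ℝ} (ht : t ≠ 0) :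
    HasDerivAt (sinCosComb pq) (t * sinCosComb (rayleighStep pq) t) t := by
  have hinv : HasDerivAt (fun t : ℝ => t⁻¹) (-(t ^ 2)⁻¹) t := hasDerivAt_inv ht
  have heval (P : ℝ[X]) : HasDerivAt (fun t : ℝ => P.eval t⁻¹)
      ((derivative P).eval t⁻¹ * -(t ^ 2)⁻¹) t := (P.hasDerivAt t⁻¹).comp t hinv
  refine (((heval pq.1).mul (Real.hasDerivAt_sin t)).add
    ((heval pq.2).mul (Real.hasDerivAt_cos t))).congr_deriv ?_
  simp only [sinCosComb, rayleighStep, rayleighPart, eval_sub, eval_mul, eval_neg, eval_pow,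
    eval_X]
  field_simp
  ring

lemma eq_sinCosComb_iterate {f : ℕ → ℝ → ℝ} (hrec : ∀ m t, f (m + 1) t = deriv (f m) t / t)
    {pq : ℝ[X] × ℝ[X]} (h₀ : ∀ t ≠ 0, f 0 t = sinCosComb pq t) (n : ℕ) {t : ℝ} (ht : t ≠ 0) :
    f n t = sinCosComb (rayleighStep^[n] pq) t := by
  induction n generalizing t with
  | zero => exact h₀ t ht
  | succ m ih =>
    have hloc : f m =ᶠ[𝓝 t] sinCosComb (rayleighStep^[m] pq) :=
      eventually_ne_nhds ht |>.mono fun s hs => ih hs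
    rw [hrec, hloc.deriv_eq, (hasDerivAt_sinCosComb _ ht).deriv, Function.iterate_succ_apply',
      mul_div_cancel_left₀ _ ht]

lemma tendsto_pow_mul_eval_inv {𝕜 : Type*} [NormedField 𝕜] {P : 𝕜[X]} {N : ℕ}
    (hP : P.natDegree ≤ N) :
    Tendsto (fun t : 𝕜 => t ^ N * P.eval t⁻¹) (𝓝[≠] 0) (𝓝 (P.coeff N)) := by
  have hrefl : (reflect N P).eval 0 = P.coeff N := by
    rw [← coeff_zero_eq_eval_zero, coeff_reflect, revAt_le (Nat.zero_le N), Nat.sub_zero]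
  refine (hrefl ▸ (reflect N P).continuous.continuousAt.tendsto.mono_left nhdsWithin_le_nhds).congr'
    ?_
  filter_upwards [self_mem_nhdsWithin] with t (ht : t ≠ 0)
  let := invertibleOfNonzero (inv_ne_zero ht)
  have := eval₂_reflect_mul_pow (RingHom.id 𝕜) t⁻¹ N P hP
  rw [invOf_eq_inv, inv_inv, ← eval, ← eval] at this
  rw [← this, inv_pow, mul_comm, inv_mul_cancel_right₀ (pow_ne_zero _ ht)]

lemma tendsto_pow_mul_sinCosComb {pq : ℝ[X] × ℝ[X]} {N : ℕ} (h₁ : pq.1.natDegree ≤ N)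
    (h₂ : pq.2.natDegree ≤ N) :
    Tendsto (fun t => t ^ N * sinCosComb pq t) (𝓝[≠] 0) (𝓝 (pq.2.coeff N)) := by
  have hsin : Tendsto Real.sin (𝓝[≠] 0) (𝓝 0) := by
    simpa using (Real.continuous_sin.tendsto 0).mono_left nhdsWithin_le_nhds
  have hcos : Tendsto Real.cos (𝓝[≠] 0) (𝓝 1) := by
    simpa using (Real.continuous_cos.tendsto 0).mono_left nhdsWithin_le_nhds
  have h := ((tendsto_pow_mul_eval_inv h₁).mul hsin).add ((tendsto_pow_mul_eval_inv h₂).mul hcos)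
  rw [mul_zero, zero_add, mul_one] at h
  refine h.congr fun t => ?_
  simp only [sinCosComb]
  ring

theorem tendsto_pow_mul_of_rayleigh_rec {f : ℕ → ℝ → ℝ}
    (hrec : ∀ m t, f (m + 1) t = deriv (f m) t / t) {pq : ℝ[X] × ℝ[X]}
    (h₀ : ∀ t ≠ 0, f 0 t = sinCosComb pq t) (h₁ : pq.1.natDegree ≤ 1) (h₂ : pq.2.natDegree ≤ 1)
    (n : ℕ) :
    Tendsto (fun t => t ^ (2 * n + 1) * f n t) (𝓝[≠] 0)
      (𝓝 ((-1) ^ n * ((2 * n - 1)‼ : ℕ) * pq.2.coeff 1)) := by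
  obtain ⟨hdeg₁, hdeg₂⟩ := natDegree_iterate_rayleighStep_le h₁ h₂ n
  rw [← coeff_iterate_rayleighStep_snd h₁ h₂ n]
  refine (tendsto_pow_mul_sinCosComb hdeg₁ hdeg₂).congr' ?_
  filter_upwards [self_mem_nhdsWithin] with t (ht : t ≠ 0)
  rw [eq_sinCosComb_iterate hrec h₀ n ht]

lemma tendsto_pow_mul_sphf (n : ℕ) :
    Tendsto (fun t => t ^ (2 * n + 1) * sphf n t) (𝓝[≠] 0) (𝓝 0) := by
  simpa using tendsto_pow_mul_of_rayleigh_rec (f := sphf) (pq := (X, 0)) (fun _ _ => rfl)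
    (fun t _ => by simp [sphf, sinCosComb, div_eq_inv_mul]) natDegree_X_le (by simp) n

lemma tendsto_pow_mul_sphg (n : ℕ) :
    Tendsto (fun t => t ^ (2 * n + 1) * sphg n t) (𝓝[≠] 0)
      (𝓝 ((-1) ^ n * ((2 * n - 1)‼ : ℕ))) := by
  simpa using tendsto_pow_mul_of_rayleigh_rec (f := sphg) (pq := (0, X)) (fun _ _ => rfl)
    (fun t _ => by simp [sphg, sinCosComb, div_eq_inv_mul]) (by simp) natDegree_X_le n

/-- Small-argument asymptotics of the spherical Hankel function:
`lim_{t→0⁺} t^{n+1} h_n(t) = -i (2n-1)!!` (with `(-1)!! = 1`). -/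
theorem sphh_small_argument_limit (n : ℕ) :
    Tendsto (fun t : ℝ => (t : ℂ) ^ (n + 1) * sphh n t) (𝓝[>] 0)
      (𝓝 (-Complex.I * (((2 * n - 1)‼ : ℕ) : ℂ))) := by
  have hf := (Complex.continuous_ofReal.tendsto _).comp
    ((tendsto_pow_mul_sphf n).mono_left (nhdsGT_le_nhdsNE 0))
  have hg := (Complex.continuous_ofReal.tendsto _).comp
    ((tendsto_pow_mul_sphg n).mono_left (nhdsGT_le_nhdsNE 0))
  have hsign : ((-1 : ℂ) ^ n) ^ 2 = 1 := by rw [← pow_mul, mul_comm, pow_mul]; norm_num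
  convert (hf.sub (hg.const_mul Complex.I)).const_mul ((-1 : ℂ) ^ n) using 2 with t
  · simp only [sphh, sphj, sphy, Function.comp_apply]
    push_cast
    ring
  · push_cast
    linear_combination (Complex.I * ((2 * n - 1)‼ : ℕ)) * hsign
end

section
/- With notation as below, there exists ρ₀ > 0 such that D'_n(ρ) ≠ 0 for all 0 < ρ < ρ₀, and lim_{ρ→0⁺} ρ^{−(n+1)}·t₃'(ρ) = (2i·√π·(𝒥_n(kω)·h_n(kω) − ℋ_n(kω)·j_n(kω))/(Γ(n+1/2)·μ₀^{−1/2}·k·n·j_n(kω)))·(ω/2)^{n+1} and lim_{ρ→0⁺} t₄'(ρ) = −h_n(kω)/j_n(kω). -/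
open Filter Topology
open scoped Nat

/-- The determinant `D'_n(ρ) = ε₀^{-1/2} ρ h_n(ωρ) 𝒥_n(kω) - μ₀^{-1/2} k ℋ_n(ωρ) j_n(kω)`. -/
noncomputable def Dn' (ε₀ μ₀ ω k : ℝ) (n : ℕ) (ρ : ℝ) : ℂ :=
  (Real.sqrt ε₀)⁻¹ * ρ * sphh n (ω * ρ) * sphJ n (k * ω)
    - (Real.sqrt μ₀)⁻¹ * k * sphH n (ω * ρ) * sphj n (k * ω)

/-- `t₃(ρ) = (μ₀^{-1/2} k 𝒥_n(ωρ) j_n(kω) - ε₀^{-1/2} ρ j_n(ωρ) 𝒥_n(kω)) / D'_n(ρ)`. -/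
noncomputable def t3 (ε₀ μ₀ ω k : ℝ) (n : ℕ) (ρ : ℝ) : ℂ :=
  ((Real.sqrt μ₀)⁻¹ * k * sphJ n (ω * ρ) * sphj n (k * ω)
    - (Real.sqrt ε₀)⁻¹ * ρ * sphj n (ω * ρ) * sphJ n (k * ω)) / Dn' ε₀ μ₀ ω k n ρ

/-- `t₄(ρ) = ρ (𝒥_n(ωρ) h_n(ωρ) - j_n(ωρ) ℋ_n(ωρ)) / D'_n(ρ)`. -/
noncomputable def t4 (ε₀ μ₀ ω k : ℝ) (n : ℕ) (ρ : ℝ) : ℂ :=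
  (ρ * (sphJ n (ω * ρ) * sphh n (ω * ρ) - sphj n (ω * ρ) * sphH n (ω * ρ)))
    / Dn' ε₀ μ₀ ω k n ρ

/-- `t₃'(ρ) = (𝒥_n(kω) h_n(kω) - ℋ_n(kω) j_n(kω)) / D'_n(ρ)`. -/
noncomputable def t3' (ε₀ μ₀ ω k : ℝ) (n : ℕ) (ρ : ℝ) : ℂ :=
  (sphJ n (k * ω) * sphh n (k * ω) - sphH n (k * ω) * sphj n (k * ω))
    / Dn' ε₀ μ₀ ω k n ρ

/-- `t₄'(ρ) = (μ₀^{-1/2} k h_n(kω) ℋ_n(ωρ) - ε₀^{-1/2} ρ ℋ_n(kω) h_n(ωρ)) / D'_n(ρ)`. -/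
noncomputable def t4' (ε₀ μ₀ ω k : ℝ) (n : ℕ) (ρ : ℝ) : ℂ :=
  ((Real.sqrt μ₀)⁻¹ * k * sphh n (k * ω) * sphH n (ω * ρ)
    - (Real.sqrt ε₀)⁻¹ * ρ * sphH n (k * ω) * sphh n (ω * ρ)) / Dn' ε₀ μ₀ ω k n ρ

/-! Rayleigh's recursion `u ↦ u'/t` preserves the shape `N(t)/t^(2m+1)` with `N` smooth, acting
on numerators by `N ↦ t N' - (2m+1) N`; so `N(0)` is multiplied by `-(2m+1)` at each step. Hence
`h_n = φ/t^(n+1)` with `φ` smooth and `φ(0) = -i (2n-1)!!`, and then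
`t^(n+1) ℋ_n(t) = t φ'(t) - n φ(t) → -n φ(0)` while `t^(n+1) · t h_n(t) → 0`. Therefore
`ρ^(n+1) D'_n(ρ)` tends to `-i n (2n-1)!! μ₀^(-1/2) k j_n(kω) / ω^(n+1)`, which is nonzero; this
gives the nonvanishing of `D'_n` near `0`, and both limits follow by dividing. -/

open Real

theorem hasDerivAt_of_eq_div_pow {𝕜 : Type*} [RCLike 𝕜] {u N : ℝ → 𝕜} {N' : 𝕜} {p : ℕ}
    {t : ℝ} (hN : HasDerivAt N N' t) (hu : ∀ s ≠ 0, u s = N s / (s : 𝕜) ^ (p + 1))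
    (ht : t ≠ 0) :
    HasDerivAt u ((t * N' - (p + 1) * N t) / (t : 𝕜) ^ (p + 2)) t := by
  have hu' : (fun s => N s / (s : 𝕜) ^ (p + 1)) =ᶠ[𝓝 t] u := by
    filter_upwards [isOpen_ne.mem_nhds ht] with s hs using (hu s hs).symm
  have hd : HasDerivAt (fun s : ℝ => (s : 𝕜) ^ (p + 1)) ((p + 1 : ℕ) * (t : 𝕜) ^ p * 1) t := by
    simpa using ((RCLike.ofRealCLM (K := 𝕜)).hasDerivAt (x := t)).fun_pow (p + 1)
  have ht' : (t : 𝕜) ≠ 0 := RCLike.ofReal_ne_zero.mpr ht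
  refine ((hN.fun_div hd (pow_ne_zero _ ht')).congr_of_eventuallyEq hu'.symm).congr_deriv ?_
  push_cast
  field_simp
  ring

section Smooth

-- Kept local: the scoped notation `ω` would clash with the frequency `ω` below.
open scoped ContDiff

theorem exists_contDiff_numerator {u : ℕ → ℝ → ℝ} (hu : ∀ m t, u (m + 1) t = deriv (u m) t / t)
    {F : ℝ → ℝ} (hF : ContDiff ℝ ∞ F) (hu₀ : ∀ t ≠ 0, u 0 t = F t / t) (m : ℕ) :
    ∃ N : ℝ → ℝ, ContDiff ℝ ∞ N ∧ N 0 = (-2) ^ m * Gamma (m + 1 / 2) / √π * F 0 ∧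
      ∀ t ≠ 0, u m t = N t / t ^ (2 * m + 1) := by
  induction m with
  | zero =>
    refine ⟨F, hF, ?_, by simpa using hu₀⟩
    rw [Nat.cast_zero, zero_add, Gamma_one_half_eq, pow_zero, one_mul,
      div_self (sqrt_ne_zero'.mpr pi_pos), one_mul]
  | succ m ih =>
    obtain ⟨N, hN, hN₀, huN⟩ := ih
    obtain ⟨hNd, hN'⟩ := contDiff_infty_iff_deriv.mp hN
    refine ⟨fun t => t * deriv N t - (2 * m + 1) * N t, contDiff_id.mul hN' |>.sub
      (contDiff_const.mul hN), ?_, fun t ht => ?_⟩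
    · have hΓ : Gamma ((m + 1 : ℕ) + 1 / 2) = (m + 1 / 2) * Gamma (m + 1 / 2) := by
        rw [← Gamma_add_one (by positivity)]; push_cast; ring_nf
      simp only [zero_mul, zero_sub, hN₀, hΓ]
      ring
    · have := (hasDerivAt_of_eq_div_pow (𝕜 := ℝ) (p := 2 * m) (hNd t).hasDerivAt
        (fun s hs => by simpa using huN s hs) ht).deriv
      rw [hu, this]
      simp only [RCLike.ofReal_real_eq_id, id]
      push_cast
      field_simp
      ring

-- `2ⁿ Γ(n + 1/2) / √π = (2n - 1)!!`
noncomputable def sphhLeading (n : ℕ) : ℂ := -Complex.I * (2 ^ n * Gamma (n + 1 / 2) / √π)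

theorem sphhLeading_ne_zero (n : ℕ) : sphhLeading n ≠ 0 := by
  have hΓ : (0 : ℝ) < 2 ^ n * Gamma (n + 1 / 2) / √π :=
    div_pos (mul_pos (by positivity) (Gamma_pos_of_pos (by positivity))) (sqrt_pos.mpr pi_pos)
  rw [sphhLeading]
  exact mul_ne_zero (neg_ne_zero.mpr Complex.I_ne_zero) (by exact_mod_cast hΓ.ne')

theorem exists_sphh_eq_div_pow (n : ℕ) :
    ∃ F : ℝ → ℂ, ContDiff ℝ ∞ F ∧ F 0 = sphhLeading n ∧
      ∀ t ≠ 0, sphh n t = F t / (t : ℂ) ^ (n + 1) := by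
  obtain ⟨Nf, hNf, hNf₀, hf⟩ :=
    exists_contDiff_numerator (u := sphf) (fun _ _ => rfl) contDiff_sin (fun _ _ => rfl) n
  obtain ⟨Ng, hNg, hNg₀, hg⟩ :=
    exists_contDiff_numerator (u := sphg) (fun _ _ => rfl) contDiff_cos (fun _ _ => rfl) n
  have hofReal : ContDiff ℝ ∞ ((↑) : ℝ → ℂ) := Complex.ofRealCLM.contDiff
  refine ⟨fun t => (-1) ^ n * ((Nf t : ℂ) - Complex.I * Ng t),
    contDiff_const.mul ((hofReal.comp hNf).sub (contDiff_const.mul (hofReal.comp hNg))),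
    ?_, fun t ht => ?_⟩
  · have hsign : ((-1) ^ n * (-2) ^ n : ℂ) = 2 ^ n := by rw [← mul_pow]; norm_num
    simp only [sphhLeading, hNf₀, hNg₀, sin_zero, cos_zero]
    push_cast
    linear_combination (-Complex.I * (Gamma (n + 1 / 2) / √π)) * hsign
  · have ht' : (t : ℂ) ≠ 0 := Complex.ofReal_ne_zero.mpr ht
    simp only [sphh, sphj, sphy, hf t ht, hg t ht]
    push_cast
    field_simp
    ring

end Smooth

theorem tendsto_pow_mul_of_eq_div_pow {h F : ℝ → ℂ} {p : ℕ} (hF : Continuous F)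
    (hh : ∀ t ≠ 0, h t = F t / (t : ℂ) ^ p) :
    Tendsto (fun t : ℝ => (t : ℂ) ^ p * h t) (𝓝[≠] 0) (𝓝 (F 0)) := by
  refine ((hF.tendsto 0).mono_left nhdsWithin_le_nhds).congr' ?_
  filter_upwards [self_mem_nhdsWithin] with t ht
  have ht' : (t : ℂ) ≠ 0 := Complex.ofReal_ne_zero.mpr ht
  rw [hh t ht]
  field_simp

theorem tendsto_pow_mul_add_mul_deriv_of_eq_div_pow {h F : ℝ → ℂ} {p : ℕ} (hF : ContDiff ℝ 1 F)
    (hh : ∀ t ≠ 0, h t = F t / (t : ℂ) ^ (p + 1)) :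
    Tendsto (fun t : ℝ => (t : ℂ) ^ (p + 1) * (h t + t * deriv h t)) (𝓝[≠] 0)
      (𝓝 (-p * F 0)) := by
  have hcont : Continuous fun t : ℝ => (t : ℂ) * deriv F t - p * F t :=
    (Complex.continuous_ofReal.mul (hF.continuous_deriv le_rfl)).sub
      (continuous_const.mul hF.continuous)
  have hlim := (hcont.tendsto 0).mono_left (nhdsWithin_le_nhds (s := {0}ᶜ))
  simp only [Complex.ofReal_zero, zero_mul, zero_sub, ← neg_mul] at hlim
  refine hlim.congr' ?_
  filter_upwards [self_mem_nhdsWithin] with t ht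
  have ht' : (t : ℂ) ≠ 0 := Complex.ofReal_ne_zero.mpr ht
  rw [(hasDerivAt_of_eq_div_pow ((hF.differentiable one_ne_zero) t).hasDerivAt hh ht).deriv, hh t ht,
    RCLike.ofReal_eq_complex_ofReal]
  field_simp
  ring

theorem tendsto_pow_mul_sphh (n : ℕ) :
    Tendsto (fun t : ℝ => (t : ℂ) ^ (n + 1) * sphh n t) (𝓝[≠] 0) (𝓝 (sphhLeading n)) := by
  obtain ⟨F, hF, hF₀, hh⟩ := exists_sphh_eq_div_pow n
  exact hF₀ ▸ tendsto_pow_mul_of_eq_div_pow hF.continuous hh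

theorem tendsto_pow_mul_sphH (n : ℕ) :
    Tendsto (fun t : ℝ => (t : ℂ) ^ (n + 1) * sphH n t) (𝓝[≠] 0)
      (𝓝 (-n * sphhLeading n)) := by
  obtain ⟨F, hF, hF₀, hh⟩ := exists_sphh_eq_div_pow n
  exact hF₀ ▸ tendsto_pow_mul_add_mul_deriv_of_eq_div_pow (hF.of_le (by simp)) hh

theorem Filter.Tendsto.pow_mul_comp_const_mul {X : ℝ → ℂ} {p : ℕ} {c : ℂ}
    (hX : Tendsto (fun t : ℝ => (t : ℂ) ^ p * X t) (𝓝[≠] 0) (𝓝 c)) {ω : ℝ} (hω : ω ≠ 0) :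
    Tendsto (fun ρ : ℝ => (ρ : ℂ) ^ p * X (ω * ρ)) (𝓝[≠] 0) (𝓝 (c / (ω : ℂ) ^ p)) := by
  have hmul : Tendsto (fun ρ : ℝ => ω * ρ) (𝓝[≠] 0) (𝓝[≠] 0) := by
    refine tendsto_nhdsWithin_of_tendsto_nhds_of_eventually_within _ ?_ ?_
    · simpa using ((continuous_const_mul ω).tendsto 0).mono_left nhdsWithin_le_nhds
    · filter_upwards [self_mem_nhdsWithin] with ρ hρ using mul_ne_zero hω hρ
  have hω' : (ω : ℂ) ≠ 0 := Complex.ofReal_ne_zero.mpr hω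
  refine ((hX.comp hmul).div_const _).congr fun ρ => ?_
  simp only [Function.comp_apply, Complex.ofReal_mul, mul_pow]
  field_simp

theorem tendsto_pow_mul_sphh_add_sphH (n : ℕ) {ω : ℝ} (hω : ω ≠ 0) (a b : ℂ) :
    Tendsto (fun ρ : ℝ => (ρ : ℂ) ^ (n + 1) * (a * ρ * sphh n (ω * ρ) + b * sphH n (ω * ρ)))
      (𝓝[≠] 0) (𝓝 (b * (-n * sphhLeading n / (ω : ℂ) ^ (n + 1)))) := by
  have hρ : Tendsto (fun ρ : ℝ => (ρ : ℂ)) (𝓝[≠] 0) (𝓝 0) := by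
    simpa using (Complex.continuous_ofReal.tendsto 0).mono_left nhdsWithin_le_nhds
  have hh := (tendsto_pow_mul_sphh n).pow_mul_comp_const_mul hω
  have hH := (tendsto_pow_mul_sphH n).pow_mul_comp_const_mul hω
  have := ((hρ.mul hh).const_mul a).add (hH.const_mul b)
  rw [zero_mul, mul_zero, zero_add] at this
  refine this.congr fun ρ => ?_
  ring

theorem sphj_zero_right {n : ℕ} (hn : n ≠ 0) : sphj n 0 = 0 := by
  simp [sphj, zero_pow hn]

noncomputable def Dn'Leading (μ₀ ω k : ℝ) (n : ℕ) : ℂ :=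
  -((√μ₀ : ℂ)⁻¹ * k * sphj n (k * ω)) * (-n * sphhLeading n / (ω : ℂ) ^ (n + 1))

section SmallRho

variable {ε₀ μ₀ ω k : ℝ} {n : ℕ}

theorem tendsto_pow_mul_Dn' (hω : ω ≠ 0) :
    Tendsto (fun ρ : ℝ => (ρ : ℂ) ^ (n + 1) * Dn' ε₀ μ₀ ω k n ρ) (𝓝[≠] 0)
      (𝓝 (Dn'Leading μ₀ ω k n)) :=
  (tendsto_pow_mul_sphh_add_sphH n hω ((√ε₀ : ℂ)⁻¹ * sphJ n (k * ω))
    (-((√μ₀ : ℂ)⁻¹ * k * sphj n (k * ω)))).congr fun ρ => by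
      simp only [Dn']; push_cast; ring

theorem Dn'Leading_ne_zero (hμ : 0 < μ₀) (hω : ω ≠ 0) (hk : k ≠ 0) (hn : n ≠ 0)
    (hj : sphj n (k * ω) ≠ 0) : Dn'Leading μ₀ ω k n ≠ 0 := by
  have hμ' : (√μ₀ : ℂ) ≠ 0 := Complex.ofReal_ne_zero.mpr (sqrt_pos.mpr hμ).ne'
  have hn' : (n : ℂ) ≠ 0 := Nat.cast_ne_zero.mpr hn
  simp [Dn'Leading, hμ', hk, hj, hn', hω, sphhLeading_ne_zero]

theorem Dn'Leading_eq (hω : ω ≠ 0) :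
    Dn'Leading μ₀ ω k n = Gamma (n + 1 / 2) * ((√μ₀)⁻¹ : ℝ) * k * n * sphj n (k * ω)
      / (2 * Complex.I * √π * ((ω / 2 : ℝ) : ℂ) ^ (n + 1)) := by
  have hω' : (ω : ℂ) ≠ 0 := Complex.ofReal_ne_zero.mpr hω
  have hπ : (√π : ℂ) ≠ 0 := Complex.ofReal_ne_zero.mpr (sqrt_pos.mpr pi_pos).ne'
  rw [eq_div_iff (by simp [hπ, hω', Complex.I_ne_zero]), Dn'Leading, sphhLeading]
  generalize (Gamma (n + 1 / 2) : ℂ) = γ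
  push_cast
  rw [div_pow]
  field_simp
  rw [Complex.I_sq]
  ring

theorem eventually_Dn'_ne_zero (hω : ω ≠ 0) (hL : Dn'Leading μ₀ ω k n ≠ 0) :
    ∀ᶠ ρ in 𝓝[≠] 0, Dn' ε₀ μ₀ ω k n ρ ≠ 0 :=
  ((tendsto_pow_mul_Dn' hω).eventually_ne hL).mono fun _ => right_ne_zero_of_mul

theorem tendsto_t3'_div_pow (hω : ω ≠ 0) (hL : Dn'Leading μ₀ ω k n ≠ 0) :
    Tendsto (fun ρ : ℝ => t3' ε₀ μ₀ ω k n ρ / (ρ : ℂ) ^ (n + 1)) (𝓝[≠] 0)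
      (𝓝 ((sphJ n (k * ω) * sphh n (k * ω) - sphH n (k * ω) * sphj n (k * ω))
        / Dn'Leading μ₀ ω k n)) :=
  (tendsto_const_nhds.div (tendsto_pow_mul_Dn' hω) hL).congr fun ρ => by
    rw [Pi.div_apply, t3', div_div, mul_comm (Dn' _ _ _ _ _ _)]

theorem tendsto_t4' (hω : ω ≠ 0) (hL : Dn'Leading μ₀ ω k n ≠ 0) :
    Tendsto (fun ρ : ℝ => t4' ε₀ μ₀ ω k n ρ) (𝓝[≠] 0)
      (𝓝 (-(sphh n (k * ω) / sphj n (k * ω)))) := by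
  have hnum := tendsto_pow_mul_sphh_add_sphH n hω (-(√ε₀ : ℂ)⁻¹ * sphH n (k * ω))
    ((√μ₀ : ℂ)⁻¹ * k * sphh n (k * ω))
  have hlim : (√μ₀ : ℂ)⁻¹ * k * sphh n (k * ω) * (-n * sphhLeading n / (ω : ℂ) ^ (n + 1))
      / Dn'Leading μ₀ ω k n = -(sphh n (k * ω) / sphj n (k * ω)) := by
    rw [Dn'Leading] at hL ⊢
    obtain ⟨hb, hX⟩ := mul_ne_zero_iff.mp hL
    simp only [ne_eq, neg_eq_zero, mul_eq_zero, inv_eq_zero, not_or] at hb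
    obtain ⟨⟨hμ, hk⟩, hj⟩ := hb
    rw [mul_div_mul_right _ _ hX]
    field_simp
  rw [← hlim]
  refine (hnum.div (tendsto_pow_mul_Dn' (ε₀ := ε₀) hω) hL).congr' ?_
  filter_upwards [self_mem_nhdsWithin] with ρ hρ
  have hρ' : (ρ : ℂ) ^ (n + 1) ≠ 0 := pow_ne_zero _ (Complex.ofReal_ne_zero.mpr hρ)
  rw [Pi.div_apply, mul_div_mul_left _ _ hρ', t4']
  push_cast
  ring

end SmallRho

theorem t3'_t4'_small_rho_asymptotics_general (ε₀ μ₀ ω : ℝ)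
    (hμ : 0 < μ₀) (hω : 0 < ω)
    (k : ℝ) (n : ℕ) (hn : 1 ≤ n)
    (hj : sphj n (k * ω) ≠ 0) :
    ∃ ρ₀ > (0 : ℝ),
      (∀ ρ : ℝ, 0 < ρ → ρ < ρ₀ → Dn' ε₀ μ₀ ω k n ρ ≠ 0) ∧
      Tendsto (fun ρ : ℝ => t3' ε₀ μ₀ ω k n ρ / (ρ : ℂ) ^ (n + 1)) (𝓝[>] 0)
        (𝓝 (2 * Complex.I * Real.sqrt Real.pi
          * (sphJ n (k * ω) * sphh n (k * ω) - sphH n (k * ω) * sphj n (k * ω))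
          / (Real.Gamma (n + 1 / 2) * (Real.sqrt μ₀)⁻¹ * k * n * sphj n (k * ω))
          * ((ω / 2 : ℝ) : ℂ) ^ (n + 1))) ∧
      Tendsto (fun ρ : ℝ => t4' ε₀ μ₀ ω k n ρ) (𝓝[>] 0)
        (𝓝 (-(sphh n (k * ω) / sphj n (k * ω)))) := by
  have hn₀ : n ≠ 0 := by omega
  have hk : k ≠ 0 := by
    rintro rfl
    exact hj (by rw [zero_mul, sphj_zero_right hn₀])
  have hL := Dn'Leading_ne_zero hμ hω.ne' hk hn₀ hj
  obtain ⟨ρ₀, hρ₀, hD⟩ := mem_nhdsGT_iff_exists_Ioo_subset.mp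
    (nhdsGT_le_nhdsNE 0 (eventually_Dn'_ne_zero (ε₀ := ε₀) hω.ne' hL))
  refine ⟨ρ₀, hρ₀, fun ρ h₀ h₁ => hD ⟨h₀, h₁⟩, ?_,
    (tendsto_t4' hω.ne' hL).mono_left (nhdsGT_le_nhdsNE 0)⟩
  convert (tendsto_t3'_div_pow hω.ne' hL).mono_left (nhdsGT_le_nhdsNE 0) using 2
  rw [Dn'Leading_eq hω.ne', div_div_eq_mul_div]
  ring

/-- Small-`ρ` asymptotics of `t₃'` and `t₄'`: `D'_n(ρ) ≠ 0` for small `ρ > 0`,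
`ρ^{-(n+1)} t₃'(ρ) → (2i√π(𝒥_n(kω)h_n(kω) - ℋ_n(kω)j_n(kω))/(Γ(n+1/2) μ₀^{-1/2} k n j_n(kω)))(ω/2)^{n+1}`,
and `t₄'(ρ) → -h_n(kω)/j_n(kω)`. -/
theorem t3'_t4'_small_rho_asymptotics (ε₀ μ₀ ω : ℝ)
    (hε : 0 < ε₀) (hμ : 0 < μ₀) (hω : 0 < ω)
    (k : ℝ) (hk : k = Real.sqrt (μ₀ * ε₀)) (n : ℕ) (hn : 1 ≤ n)
    (hj : sphj n (k * ω) ≠ 0) :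
    ∃ ρ₀ > (0 : ℝ),
      (∀ ρ : ℝ, 0 < ρ → ρ < ρ₀ → Dn' ε₀ μ₀ ω k n ρ ≠ 0) ∧
      Tendsto (fun ρ : ℝ => t3' ε₀ μ₀ ω k n ρ / (ρ : ℂ) ^ (n + 1)) (𝓝[>] 0)
        (𝓝 (2 * Complex.I * Real.sqrt Real.pi
          * (sphJ n (k * ω) * sphh n (k * ω) - sphH n (k * ω) * sphj n (k * ω))
          / (Real.Gamma (n + 1 / 2) * (Real.sqrt μ₀)⁻¹ * k * n * sphj n (k * ω))
          * ((ω / 2 : ℝ) : ℂ) ^ (n + 1))) ∧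
      Tendsto (fun ρ : ℝ => t4' ε₀ μ₀ ω k n ρ) (𝓝[>] 0)
        (𝓝 (-(sphh n (k * ω) / sphj n (k * ω)))) :=
  t3'_t4'_small_rho_asymptotics_general ε₀ μ₀ ω hμ hω k n hn hj
end

section
/- Fix ω > 0, an integer n ≥ 1, and ρ₁ ∈ (0,1). For ρ ∈ (0, ρ₁) set a_ρ = 2(1−ρ)/(2−ρ) and b_ρ = 1/(2−ρ), and define A_n(ρ) = ∫_ρ^{ρ₁} h_n(ω s)·(a_ρ + b_ρ s)²·s^{−1} ds. Then lim_{ρ→0⁺} ρ^{n+1}·A_n(ρ) = −i·(2n−1)!!/((n+1)·ω^{n+1}). -/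
open Filter Topology
open scoped Nat

open MeasureTheory

open Set Polynomial

/-!
Rayleigh's recursion preserves the shape `(p(t) sin t + q(t) cos t) / t^(2m+1)` with polynomials
`p, q`, and each step multiplies their constant terms by `-(2m+1)`. Hence `Φ(t) = t^(n+1) h_n(t)`
extends continuously to `t = 0` with `Φ(0) = -i (2n-1)!!`, and the integral equals
`ω^{-(n+1)} ∫_ρ^{ρ₁} Ψ(ρ,s) s^{-(n+2)} ds` with `Ψ(ρ,s) = Φ(ωs) (a_ρ + b_ρ s)²` jointly continuous
and `Ψ(0,0) = Φ(0)`. Substituting `s = ρu`, `ρ^(n+1)` times this integral is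
`∫_1^{ρ₁/ρ} Ψ(ρ,ρu) u^{-(n+2)} du`, which by dominated convergence tends to
`Ψ(0,0) ∫_1^∞ u^{-(n+2)} du = Ψ(0,0)/(n+1)`.
-/

lemma hasDerivAt_trig_poly_div_pow (p q : ℝ[X]) (k : ℕ) {t : ℝ} (ht : t ≠ 0) :
    HasDerivAt (fun s => (p.eval s * Real.sin s + q.eval s * Real.cos s) / s ^ (k + 1))
      (((X * (derivative p - q) - C ((k + 1 : ℕ) : ℝ) * p).eval t * Real.sin t +
        (X * (derivative q + p) - C ((k + 1 : ℕ) : ℝ) * q).eval t * Real.cos t) /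
          t ^ (k + 2)) t := by
  have hnum : HasDerivAt (fun s => p.eval s * Real.sin s + q.eval s * Real.cos s)
      (p.derivative.eval t * Real.sin t + p.eval t * Real.cos t +
        (q.derivative.eval t * Real.cos t + q.eval t * -Real.sin t)) t :=
    ((p.hasDerivAt t).mul (Real.hasDerivAt_sin t)).add
      ((q.hasDerivAt t).mul (Real.hasDerivAt_cos t))
  have hden : HasDerivAt (fun s : ℝ => s ^ (k + 1)) (((k + 1 : ℕ) : ℝ) * t ^ k) t := by
    simpa using hasDerivAt_pow (k + 1) t
  refine (hnum.div hden (pow_ne_zero _ ht)).congr_deriv ?_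
  simp only [eval_sub, eval_mul, eval_X, eval_C, eval_add]
  field_simp
  ring

lemma exists_trig_poly_form_of_rayleigh (F : ℕ → ℝ → ℝ)
    (hF : ∀ m t, F (m + 1) t = deriv (F m) t / t) (p₀ q₀ : ℝ[X])
    (h₀ : ∀ t ≠ 0, F 0 t = (p₀.eval t * Real.sin t + q₀.eval t * Real.cos t) / t) (m : ℕ) :
    ∃ p q : ℝ[X],
      p.eval 0 = (-1) ^ m * ((2 * m - 1)‼ : ℕ) * p₀.eval 0 ∧
      q.eval 0 = (-1) ^ m * ((2 * m - 1)‼ : ℕ) * q₀.eval 0 ∧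
      ∀ t ≠ 0, F m t = (p.eval t * Real.sin t + q.eval t * Real.cos t) / t ^ (2 * m + 1) := by
  induction m with
  | zero => exact ⟨p₀, q₀, by simp, by simp, by simpa using h₀⟩
  | succ m ih =>
    obtain ⟨p, q, hp, hq, hFm⟩ := ih
    have hdf : ((2 * (m + 1) - 1)‼ : ℝ) = (2 * m + 1) * ((2 * m - 1)‼ : ℕ) := by
      rw [show 2 * (m + 1) - 1 = 2 * m + 1 by omega, Nat.doubleFactorial_add_one]
      push_cast
      ring
    refine ⟨X * (derivative p - q) - C ((2 * m + 1 : ℕ) : ℝ) * p,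
      X * (derivative q + p) - C ((2 * m + 1 : ℕ) : ℝ) * q, ?_, ?_, fun t ht => ?_⟩
    · simp only [eval_sub, eval_mul, eval_X, eval_C, hp, hdf]
      push_cast
      ring
    · simp only [eval_sub, eval_mul, eval_X, eval_C, hq, hdf]
      push_cast
      ring
    · have hderiv : deriv (F m) t = _ :=
        (Filter.eventuallyEq_of_mem (isOpen_ne.mem_nhds ht) hFm).deriv_eq.trans
          (hasDerivAt_trig_poly_div_pow p q (2 * m) ht).deriv
      rw [hF, hderiv, div_div, ← pow_succ, show 2 * m + 2 + 1 = 2 * (m + 1) + 1 by ring]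

lemma exists_continuous_pow_succ_mul_sphh (n : ℕ) : ∃ Φ : ℝ → ℂ, Continuous Φ ∧
    Φ 0 = -Complex.I * (((2 * n - 1)‼ : ℕ) : ℂ) ∧
    ∀ t : ℝ, t ≠ 0 → (t : ℂ) ^ (n + 1) * sphh n t = Φ t := by
  obtain ⟨pf, qf, -, hqf, hf⟩ := exists_trig_poly_form_of_rayleigh sphf (fun _ _ => rfl) 1 0
    (fun t _ => by simp [sphf]) n
  obtain ⟨pg, qg, -, hqg, hg⟩ := exists_trig_poly_form_of_rayleigh sphg (fun _ _ => rfl) 0 1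
    (fun t _ => by simp [sphg]) n
  refine ⟨fun t => (-1) ^ n *
      (((pf.eval t * Real.sin t + qf.eval t * Real.cos t : ℝ) : ℂ) -
        Complex.I * ((pg.eval t * Real.sin t + qg.eval t * Real.cos t : ℝ) : ℂ)),
    by fun_prop, ?_, fun t ht => ?_⟩
  · have hsq : ((-1 : ℂ) ^ n) ^ 2 = 1 := by rw [← pow_mul, mul_comm, pow_mul, neg_one_sq, one_pow]
    simp only [Real.sin_zero, Real.cos_zero, mul_zero, mul_one, zero_add, hqf, hqg, eval_zero,
      eval_one]
    push_cast
    linear_combination (-Complex.I * (((2 * n - 1)‼ : ℕ) : ℂ)) * hsq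
  · have htc : (t : ℂ) ≠ 0 := Complex.ofReal_ne_zero.mpr ht
    simp only [sphh, sphj, sphy, hf t ht, hg t ht]
    push_cast
    field_simp
    ring

lemma inv_pow_eq_rpow_neg {u : ℝ} (hu : 0 ≤ u) (k : ℕ) : (u ^ k)⁻¹ = u ^ (-(k : ℝ)) := by
  rw [Real.rpow_neg hu, Real.rpow_natCast]

lemma integrableOn_Ioi_one_inv_pow (n : ℕ) :
    IntegrableOn (fun u : ℝ => (u ^ (n + 2))⁻¹) (Ioi 1) := by
  refine (integrableOn_Ioi_rpow_of_lt (a := -((n + 2 : ℕ) : ℝ)) (by push_cast; linarith)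
    one_pos).congr_fun (fun u hu => ?_) measurableSet_Ioi
  rw [inv_pow_eq_rpow_neg (zero_le_one.trans (le_of_lt hu))]

lemma integral_Ioi_one_inv_pow (n : ℕ) :
    ∫ u in Ioi (1 : ℝ), (u ^ (n + 2))⁻¹ = 1 / (n + 1) := by
  rw [setIntegral_congr_fun measurableSet_Ioi
    (fun u hu => inv_pow_eq_rpow_neg (zero_le_one.trans (le_of_lt hu)) (n + 2)),
    integral_Ioi_rpow_of_lt (by push_cast; linarith) one_pos, Real.one_rpow, show -((n + 2 : ℕ) : ℝ) + 1 = -(n + 1) by push_cast; ring, div_neg, neg_div,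
    neg_neg]

lemma pow_succ_mul_integral_div_pow_eq (Ψ : ℝ → ℂ) (n : ℕ) {ρ : ℝ} (hρ : ρ ≠ 0) (ρ₁ : ℝ) :
    (ρ : ℂ) ^ (n + 1) * ∫ s in ρ..ρ₁, Ψ s / (s : ℂ) ^ (n + 2) =
      ∫ u in 1..ρ₁ / ρ, Ψ (ρ * u) / (u : ℂ) ^ (n + 2) := by
  have hρc : (ρ : ℂ) ≠ 0 := Complex.ofReal_ne_zero.mpr hρ
  have hscale : ∀ u : ℝ, Ψ (ρ * u) / (u : ℂ) ^ (n + 2) =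
      (ρ : ℂ) ^ (n + 2) * (Ψ (ρ * u) / ((ρ * u : ℝ) : ℂ) ^ (n + 2)) := by
    intro u
    rw [Complex.ofReal_mul, mul_pow, ← mul_div_assoc, mul_div_mul_left _ _ (pow_ne_zero _ hρc)]
  simp_rw [hscale]
  rw [intervalIntegral.integral_const_mul,
    intervalIntegral.integral_comp_mul_left (fun s => Ψ s / (s : ℂ) ^ (n + 2)) hρ,
    mul_one, mul_div_cancel₀ _ hρ, Complex.real_smul, Complex.ofReal_inv]
  field_simp
  ring

lemma intervalIntegral_eq_integral_Ioi_indicator {E : Type*} [NormedAddCommGroup E]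
    [NormedSpace ℝ E] (f : ℝ → E) {a b : ℝ} (hab : a ≤ b) :
    ∫ u in a..b, f u = ∫ u in Ioi a, (Iic b).indicator f u := by
  rw [intervalIntegral.integral_of_le hab, setIntegral_indicator measurableSet_Iic,
    Ioi_inter_Iic]

lemma mk_mul_mem_Icc_prod_Icc {ρ₁ ρ u : ℝ} (hρ : ρ ∈ Ioo 0 ρ₁) (hu : u ∈ Icc 0 (ρ₁ / ρ)) :
    (ρ, ρ * u) ∈ Icc 0 ρ₁ ×ˢ Icc 0 ρ₁ := by
  refine ⟨⟨hρ.1.le, hρ.2.le⟩, mul_nonneg hρ.1.le hu.1, ?_⟩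
  rw [← le_div_iff₀' hρ.1]
  exact hu.2

section Rescaling

variable (Ψ : ℝ → ℝ → ℂ) (n : ℕ) (ρ₁ : ℝ)

/-- The integrand of `ρ^(n+1) ∫_ρ^{ρ₁} Ψ ρ s / s^(n+2) ds` after the substitution `s = ρ u`,
extended by zero beyond `u = ρ₁ / ρ`. -/
noncomputable def rescaledIntegrand (ρ : ℝ) : ℝ → ℂ :=
  (Iic (ρ₁ / ρ)).indicator fun u => Ψ ρ (ρ * u) / (u : ℂ) ^ (n + 2)

variable {Ψ n ρ₁}

lemma integral_rescaledIntegrand {ρ : ℝ} (hρ : 0 < ρ) (hρρ₁ : ρ ≤ ρ₁) :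
    ∫ u in Ioi 1, rescaledIntegrand Ψ n ρ₁ ρ u =
      (ρ : ℂ) ^ (n + 1) * ∫ s in ρ..ρ₁, Ψ ρ s / (s : ℂ) ^ (n + 2) := by
  rw [pow_succ_mul_integral_div_pow_eq _ n hρ.ne',
    intervalIntegral_eq_integral_Ioi_indicator _ ((one_le_div₀ hρ).mpr hρρ₁)]
  rfl

lemma aestronglyMeasurable_rescaledIntegrand
    (hΨ : ContinuousOn (Function.uncurry Ψ) (Icc 0 ρ₁ ×ˢ Icc 0 ρ₁)) {ρ : ℝ} (hρ : ρ ∈ Ioo 0 ρ₁) :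
    AEStronglyMeasurable (rescaledIntegrand Ψ n ρ₁ ρ) (volume.restrict (Ioi 1)) := by
  rw [rescaledIntegrand, aestronglyMeasurable_indicator_iff measurableSet_Iic,
    Measure.restrict_restrict measurableSet_Iic]
  refine ContinuousOn.aestronglyMeasurable ?_ (measurableSet_Iic.inter measurableSet_Ioi)
  refine (hΨ.comp (by fun_prop) fun u hu =>
    mk_mul_mem_Icc_prod_Icc hρ ⟨zero_le_one.trans hu.2.le, hu.1⟩).div (by fun_prop)
    fun u hu => pow_ne_zero _ (Complex.ofReal_ne_zero.mpr (zero_lt_one.trans hu.2).ne')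

lemma norm_rescaledIntegrand_le {M : ℝ} (hM : ∀ x ∈ Icc 0 ρ₁ ×ˢ Icc 0 ρ₁, ‖Ψ x.1 x.2‖ ≤ M)
    (hM0 : 0 ≤ M) {ρ u : ℝ} (hρ : ρ ∈ Ioo 0 ρ₁) (hu : 1 < u) :
    ‖rescaledIntegrand Ψ n ρ₁ ρ u‖ ≤ M * (u ^ (n + 2))⁻¹ := by
  have hu0 : 0 < u := zero_lt_one.trans hu
  by_cases hub : u ∈ Iic (ρ₁ / ρ)
  · rw [rescaledIntegrand, indicator_of_mem hub, norm_div, norm_pow, Complex.norm_real,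
      Real.norm_of_nonneg hu0.le, div_eq_mul_inv]
    gcongr
    exact hM _ (mk_mul_mem_Icc_prod_Icc hρ ⟨hu0.le, hub⟩)
  · rw [rescaledIntegrand, indicator_of_notMem hub, norm_zero]
    positivity

lemma tendsto_rescaledIntegrand (hρ₁ : 0 < ρ₁)
    (hΨ : ContinuousWithinAt (Function.uncurry Ψ) (Icc 0 ρ₁ ×ˢ Icc 0 ρ₁) (0, 0))
    {u : ℝ} (hu : 1 < u) :
    Tendsto (fun ρ => rescaledIntegrand Ψ n ρ₁ ρ u) (𝓝[>] 0)
      (𝓝 (Ψ 0 0 / (u : ℂ) ^ (n + 2))) := by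
  have hu0 : 0 < u := zero_lt_one.trans hu
  have hsmall : ∀ᶠ ρ in 𝓝[>] (0 : ℝ), ρ ∈ Ioo 0 ρ₁ ∧ u ∈ Icc 0 (ρ₁ / ρ) := by
    filter_upwards [Ioo_mem_nhdsGT (div_pos hρ₁ hu0)] with ρ ⟨hρ, hρu⟩
    refine ⟨⟨hρ, hρu.trans_le (div_le_self hρ₁.le hu.le)⟩, hu0.le, ?_⟩
    rw [le_div_iff₀' hρ]
    exact ((lt_div_iff₀ hu0).mp hρu).le
  have hpath : Tendsto (fun ρ : ℝ => (ρ, ρ * u)) (𝓝[>] 0) (𝓝[Icc 0 ρ₁ ×ˢ Icc 0 ρ₁] (0, 0)) :=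
    tendsto_nhdsWithin_iff.mpr ⟨(Continuous.tendsto' (by fun_prop) 0 (0, 0) (by simp)).mono_left
      nhdsWithin_le_nhds, hsmall.mono fun ρ h => mk_mul_mem_Icc_prod_Icc h.1 h.2⟩
  refine ((hΨ.tendsto.comp hpath).div_const _).congr' ?_
  filter_upwards [hsmall] with ρ hρ
  simp [rescaledIntegrand, indicator_of_mem (show u ∈ Iic (ρ₁ / ρ) from hρ.2.2)]

end Rescaling

lemma integral_Ioi_one_div_pow (c : ℂ) (n : ℕ) :
    ∫ u in Ioi (1 : ℝ), c / (u : ℂ) ^ (n + 2) = c / (n + 1) := by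
  simp_rw [div_eq_mul_inv c, ← Complex.ofReal_pow, ← Complex.ofReal_inv]
  rw [integral_const_mul, integral_complex_ofReal, integral_Ioi_one_inv_pow]
  push_cast
  ring

theorem tendsto_pow_succ_mul_integral_div_pow (n : ℕ) {ρ₁ : ℝ} (hρ₁ : 0 < ρ₁)
    {Ψ : ℝ → ℝ → ℂ} (hΨ : ContinuousOn (Function.uncurry Ψ) (Icc 0 ρ₁ ×ˢ Icc 0 ρ₁)) :
    Tendsto (fun ρ : ℝ => (ρ : ℂ) ^ (n + 1) * ∫ s in ρ..ρ₁, Ψ ρ s / (s : ℂ) ^ (n + 2))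
      (𝓝[>] 0) (𝓝 (Ψ 0 0 / (n + 1))) := by
  have h00 : ((0 : ℝ), (0 : ℝ)) ∈ Icc 0 ρ₁ ×ˢ Icc 0 ρ₁ := ⟨⟨le_rfl, hρ₁.le⟩, ⟨le_rfl, hρ₁.le⟩⟩
  obtain ⟨M, hM⟩ := (isCompact_Icc.prod isCompact_Icc).exists_bound_of_continuousOn hΨ
  have hM0 : 0 ≤ M := (norm_nonneg _).trans (hM _ h00)
  have hIoo : ∀ᶠ ρ in 𝓝[>] (0 : ℝ), ρ ∈ Ioo 0 ρ₁ := Ioo_mem_nhdsGT hρ₁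
  rw [← integral_Ioi_one_div_pow]
  refine (tendsto_integral_filter_of_dominated_convergence _
    (hIoo.mono fun ρ hρ => aestronglyMeasurable_rescaledIntegrand hΨ hρ)
    (hIoo.mono fun ρ hρ => (ae_restrict_mem measurableSet_Ioi).mono fun u hu =>
      norm_rescaledIntegrand_le hM hM0 hρ hu)
    ((integrableOn_Ioi_one_inv_pow n).const_mul M)
    ((ae_restrict_mem measurableSet_Ioi).mono fun u hu =>
      tendsto_rescaledIntegrand hρ₁ (hΨ _ h00) hu)).congr' ?_
  filter_upwards [hIoo] with ρ hρ
  exact integral_rescaledIntegrand hρ.1 hρ.2.le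

/-- `a_ρ + b_ρ s` for the regularized cloaking map `F_ρ^{(1)}`. -/
noncomputable def cloakingWeight (ρ s : ℝ) : ℝ := 2 * (1 - ρ) / (2 - ρ) + s / (2 - ρ)

lemma continuousOn_mul_cloakingWeight_sq {Φ : ℝ → ℂ} (hΦ : Continuous Φ) (ω : ℝ) {ρ₁ : ℝ}
    (hρ₁ : ρ₁ < 2) :
    ContinuousOn (fun x : ℝ × ℝ => Φ (ω * x.2) * ((cloakingWeight x.1 x.2 ^ 2 : ℝ) : ℂ))
      (Icc 0 ρ₁ ×ˢ Icc 0 ρ₁) := by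
  have hden : ∀ x ∈ Icc 0 ρ₁ ×ˢ Icc (0 : ℝ) ρ₁, 2 - x.1 ≠ 0 := fun x hx => by linarith [hx.1.2]
  refine (hΦ.comp_continuousOn (by fun_prop)).mul
    (Complex.continuous_ofReal.comp_continuousOn ?_)
  unfold cloakingWeight
  fun_prop (disch := exact hden)

lemma sphh_mul_sq_div_eq {n : ℕ} {Φ : ℝ → ℂ}
    (hΦ : ∀ t : ℝ, t ≠ 0 → (t : ℂ) ^ (n + 1) * sphh n t = Φ t) {ω s : ℝ} (hω : ω ≠ 0)
    (hs : s ≠ 0) (w : ℝ) :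
    sphh n (ω * s) * ((w ^ 2 / s : ℝ) : ℂ) =
      ((ω : ℂ) ^ (n + 1))⁻¹ * (Φ (ω * s) * ((w ^ 2 : ℝ) : ℂ) / (s : ℂ) ^ (n + 2)) := by
  have hωc : (ω : ℂ) ≠ 0 := Complex.ofReal_ne_zero.mpr hω
  have hsc : (s : ℂ) ≠ 0 := Complex.ofReal_ne_zero.mpr hs
  rw [← hΦ _ (mul_ne_zero hω hs)]
  push_cast
  field_simp
  ring

theorem weighted_hankel_integral_limit_general (ω : ℝ) (hω : 0 < ω) (n : ℕ)
    (ρ₁ : ℝ) (hρ₁ : 0 < ρ₁) (hρ₁' : ρ₁ < 1) :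
    Tendsto (fun ρ : ℝ => (ρ : ℂ) ^ (n + 1) *
        ∫ s in ρ..ρ₁, sphh n (ω * s) *
          (((2 * (1 - ρ) / (2 - ρ) + s / (2 - ρ)) ^ 2 / s : ℝ) : ℂ))
      (𝓝[>] 0)
      (𝓝 (-Complex.I * (((2 * n - 1)‼ : ℕ) : ℂ) / ((n + 1) * (ω : ℂ) ^ (n + 1)))) := by
  obtain ⟨Φ, hΦ, hΦ0, hΦsphh⟩ := exists_continuous_pow_succ_mul_sphh n
  set Ψ : ℝ → ℝ → ℂ := fun ρ s => Φ (ω * s) * ((cloakingWeight ρ s ^ 2 : ℝ) : ℂ)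
  have hlim := (tendsto_pow_succ_mul_integral_div_pow (Ψ := Ψ) n hρ₁
    (continuousOn_mul_cloakingWeight_sq hΦ ω (by linarith))).const_mul
    ((ω : ℂ) ^ (n + 1))⁻¹
  have hvalue : ((ω : ℂ) ^ (n + 1))⁻¹ * (Ψ 0 0 / (n + 1)) =
      -Complex.I * (((2 * n - 1)‼ : ℕ) : ℂ) / ((n + 1) * (ω : ℂ) ^ (n + 1)) := by
    rw [show Ψ 0 0 = Φ 0 by norm_num [Ψ, cloakingWeight], hΦ0]
    field_simp
  rw [hvalue] at hlim
  refine hlim.congr' ?_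
  filter_upwards [Ioo_mem_nhdsGT hρ₁] with ρ ⟨hρ, hρρ₁⟩
  have hs0 : ∀ s ∈ uIcc ρ ρ₁, s ≠ 0 := fun s hs =>
    (hρ.trans_le (uIcc_of_le hρρ₁.le ▸ hs).1).ne'
  rw [intervalIntegral.integral_congr fun s hs => sphh_mul_sq_div_eq hΦsphh hω.ne' (hs0 s hs) _,
    intervalIntegral.integral_const_mul, mul_left_comm]
  rfl

/-- With `a_ρ = 2(1-ρ)/(2-ρ)`, `b_ρ = 1/(2-ρ)` and
`A_n(ρ) = ∫_ρ^{ρ₁} h_n(ωs)(a_ρ + b_ρ s)² s⁻¹ ds`, one has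
`lim_{ρ→0⁺} ρ^{n+1} A_n(ρ) = -i (2n-1)!!/((n+1) ω^{n+1})`. -/
theorem weighted_hankel_integral_limit (ω : ℝ) (hω : 0 < ω) (n : ℕ) (hn : 1 ≤ n)
    (ρ₁ : ℝ) (hρ₁ : 0 < ρ₁) (hρ₁' : ρ₁ < 1) :
    Tendsto (fun ρ : ℝ => (ρ : ℂ) ^ (n + 1) *
        ∫ s in ρ..ρ₁, sphh n (ω * s) *
          (((2 * (1 - ρ) / (2 - ρ) + s / (2 - ρ)) ^ 2 / s : ℝ) : ℂ))
      (𝓝[>] 0)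
      (𝓝 (-Complex.I * (((2 * n - 1)‼ : ℕ) : ℂ) / ((n + 1) * (ω : ℂ) ^ (n + 1)))) :=
  weighted_hankel_integral_limit_general ω hω n ρ₁ hρ₁ hρ₁'
end
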